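/- For positive integers m, n, the number of spanning trees of K_{m,n} with all degrees odd equals the double sum, over tuples (k_1,...,k_m) of even naturals summing to n-1 and tuples (l_1,...,l_n) of even naturals summing to m-1, of (m-1)!(n-1)!/(∏ k_i! ∏ l_j!). -/

import Mathlib

/-!
Grouping the odd spanning trees of `K_{m,n}` by their degree sequences, it suffices to count the
spanning trees of the complete bipartite graph on `(A, B)` in which each vertex `v` has degree
`k v + 1`, where `∑_A k = |B| - 1` and `∑_B k = |A| - 1`. Their number `N` satisfies
`N * ∏ (k v)! = (|A| - 1)! * (|B| - 1)!`, by induction on `|A| + |B|`. Apart from the single edge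
(`|A| = |B| = 1`), the larger side, say `A`, contains a leaf `x` because `∑_A k = |B| - 1 < |A|`.
Deleting `x` is a bijection between the trees in which `x` hangs off `y ∈ B` and the trees on
`(A \ {x}, B)` in which the degree of `y` drops by one; summing the induction hypothesis over `y`
produces the factor `∑_B k = |A| - 1`.
-/

open Finset Function
open scoped Nat

instance {α β : Type*} [Nonempty α] [Nonempty β] : Nontrivial (α ⊕ β) :=
  ⟨⟨.inl (Classical.arbitrary α), .inr (Classical.arbitrary β), Sum.inl_ne_inr⟩⟩

namespace SimpleGraph

variable {V : Type*} {G H : SimpleGraph V} {s t s' t' : Set V} {x y u v : V}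

theorem natCard_adj_eq_ncard_neighborSet :
    Nat.card {w // G.Adj v w} = (G.neighborSet v).ncard :=
  Nat.card_coe_set_eq _

theorem IsBipartiteWith.anti (h : G.IsBipartiteWith s t) (hle : H ≤ G) :
    H.IsBipartiteWith s t :=
  ⟨h.disjoint, fun _ _ hvw => h.mem_of_adj (hle hvw)⟩

theorem IsBipartiteWith.mono (h : G.IsBipartiteWith s t) (hs : s ⊆ s') (ht : t ⊆ t')
    (hd : Disjoint s' t') : G.IsBipartiteWith s' t' :=
  ⟨hd, fun _ _ hvw =>
    (h.mem_of_adj hvw).imp (And.imp (@hs _) (@ht _)) (And.imp (@ht _) (@hs _))⟩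

theorem IsBipartiteWith.diff_singleton (h : G.IsBipartiteWith s t) (hx : ∀ w, ¬G.Adj x w) :
    G.IsBipartiteWith (s \ {x}) t := by
  refine ⟨h.disjoint.mono_left Set.sdiff_subset, fun v w hvw => ?_⟩
  have hv : v ≠ x := by rintro rfl; exact hx w hvw
  have hw : w ≠ x := by rintro rfl; exact hx v hvw.symm
  simpa [hv, hw] using h.mem_of_adj hvw

theorem IsBipartiteWith.sup (hG : G.IsBipartiteWith s t) (hH : H.IsBipartiteWith s t) :
    (G ⊔ H).IsBipartiteWith s t :=
  ⟨hG.disjoint, fun _ _ hvw => hvw.elim (hG.mem_of_adj ·) (hH.mem_of_adj ·)⟩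

theorem isBipartiteWith_edge (hd : Disjoint s t) (hx : x ∈ s) (hy : y ∈ t) :
    (edge x y).IsBipartiteWith s t := by
  refine ⟨hd, fun v w hvw => ?_⟩
  obtain ⟨⟨rfl, rfl⟩ | ⟨rfl, rfl⟩, -⟩ := (edge_adj _ _ _ _).1 hvw
  · exact Or.inl ⟨hx, hy⟩
  · exact Or.inr ⟨hy, hx⟩

theorem neighborSet_sup_edge_left (hxy : x ≠ y) :
    (G ⊔ edge x y).neighborSet x = insert y (G.neighborSet x) := by
  ext w
  by_cases hw : w = y <;> simp [edge_adj, hxy, hw]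

theorem neighborSet_sup_edge_of_ne (hx : v ≠ x) (hy : v ≠ y) :
    (G ⊔ edge x y).neighborSet v = G.neighborSet v := by
  ext w
  simp [edge_adj, hx, hy]

theorem ncard_neighborSet_sup_edge [Finite V] [DecidableEq V] (hxy : x ≠ y) (h : ¬G.Adj x y)
    (v : V) :
    ((G ⊔ edge x y).neighborSet v).ncard =
      (G.neighborSet v).ncard + if v = x ∨ v = y then 1 else 0 := by
  by_cases hvx : v = x
  · subst hvx
    rw [neighborSet_sup_edge_left hxy,
      Set.ncard_insert_of_notMem (show y ∉ G.neighborSet v from h)]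
    simp
  by_cases hvy : v = y
  · subst hvy
    rw [edge_comm, neighborSet_sup_edge_left (Ne.symm hxy),
      Set.ncard_insert_of_notMem (show x ∉ G.neighborSet v from fun h' => h h'.symm)]
    simp
  · rw [neighborSet_sup_edge_of_ne hvx hvy]
    simp [hvx, hvy]

theorem Reachable.of_sup_edge (hx : ∀ w, ¬G.Adj x w) (h : (G ⊔ edge x y).Reachable u v)
    (hu : u ≠ x) (hv : v ≠ x) : G.Reachable u v := by
  classical
  -- contract the pendant edge `x y` onto `y`
  let f : V → V := fun w => if w = x then y else w
  have hf : ∀ a b, (G ⊔ edge x y).Adj a b → G.Reachable (f a) (f b) := by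
    rintro a b (hab | hab)
    · have ha : a ≠ x := by rintro rfl; exact hx b hab
      have hb : b ≠ x := by rintro rfl; exact hx a hab.symm
      simpa [f, ha, hb] using hab.reachable
    · obtain ⟨⟨rfl, rfl⟩ | ⟨rfl, rfl⟩, -⟩ := (edge_adj _ _ _ _).1 hab <;> simp [f]
  rw [reachable_iff_reflTransGen] at h ⊢
  simpa [Function.onFun, f, hu, hv] using Relation.ReflTransGen.lift' f
    (fun a b hab => (reachable_iff_reflTransGen _ _).1 (hf a b hab)) _ _ h

theorem Reachable.one_le_ncard_neighborSet [Finite V] (h : G.Reachable u v) (huv : u ≠ v) :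
    1 ≤ (G.neighborSet u).ncard :=
  (Set.ncard_pos (Set.toFinite _)).2 (h.nonempty_neighborSet_left huv)

theorem exists_sup_edge_eq_of_ncard_neighborSet_eq_one (h : (G.neighborSet x).ncard = 1) :
    ∃ y, G.Adj x y ∧ ∃ G' : SimpleGraph V, (∀ w, ¬G'.Adj x w) ∧ G' ⊔ edge x y = G := by
  obtain ⟨y, hy⟩ := Set.ncard_eq_one.1 h
  have hxy : G.Adj x y := (Set.ext_iff.1 hy y).2 rfl
  refine ⟨y, hxy, G \ edge x y, fun w hw => ?_,
    sdiff_sup_cancel ((edge_le_iff _).2 (Or.inr hxy))⟩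
  obtain ⟨hw, hne⟩ := (sdiff_adj _ _ _ _).1 hw
  obtain rfl : w = y := (Set.ext_iff.1 hy w).1 hw
  exact hne ((edge_adj _ _ _ _).2 ⟨Or.inl ⟨rfl, rfl⟩, hxy.ne⟩)

theorem sup_edge_eq_sup_edge_iff {G₁ G₂ : SimpleGraph V} {y₁ y₂ : V}
    (h₁ : ∀ w, ¬G₁.Adj x w) (h₂ : ∀ w, ¬G₂.Adj x w) (hy₁ : x ≠ y₁) :
    G₁ ⊔ edge x y₁ = G₂ ⊔ edge x y₂ ↔ y₁ = y₂ ∧ G₁ = G₂ := by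
  refine ⟨fun h => ?_, by rintro ⟨rfl, rfl⟩; rfl⟩
  have hadj : (G₂ ⊔ edge x y₂).Adj x y₁ :=
    h ▸ Or.inr ((edge_adj _ _ _ _).2 ⟨Or.inl ⟨rfl, rfl⟩, hy₁⟩)
  obtain rfl : y₁ = y₂ := by
    rcases hadj with hadj | hadj
    · exact absurd hadj (h₂ _)
    · obtain ⟨⟨-, rfl⟩ | ⟨-, rfl⟩, hne⟩ := (edge_adj _ _ _ _).1 hadj
      · rfl
      · exact absurd rfl hne
  refine ⟨rfl, ?_⟩
  calc G₁ = (G₁ ⊔ edge x y₁) \ edge x y₁ := by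
        rw [sup_sdiff_right_self, sdiff_edge _ (h₁ y₁)]
    _ = G₂ := by rw [h, sup_sdiff_right_self, sdiff_edge _ (h₂ y₁)]

theorem IsTree.one_le_ncard_neighborSet [Finite V] [Nontrivial V] (hT : G.IsTree) (v : V) :
    1 ≤ (G.neighborSet v).ncard := by
  obtain ⟨w, hw⟩ := exists_ne v
  exact (hT.connected.preconnected v w).one_le_ncard_neighborSet hw.symm

theorem IsTree.sum_ncard_neighborSet_sub_one [Fintype V] [DecidableEq V] [Nontrivial V]
    {A B : Finset V} (hT : G.IsTree) (hbip : G.IsBipartiteWith A B)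
    (hcover : ∀ v, v ∈ A ∪ B) :
    ∑ v ∈ A, ((G.neighborSet v).ncard - 1) = #B - 1 := by
  classical
  have hcard : #A + #B = Fintype.card V := by
    rw [← card_union_of_disjoint (disjoint_coe.1 hbip.disjoint), ← card_univ,
      eq_univ_of_forall hcover]
  have hsum : ∑ v ∈ A, (G.neighborSet v).ncard = #A + #B - 1 := by
    have h1 := isBipartiteWith_sum_degrees_eq_card_edges hbip
    have h2 := hT.card_edgeFinset
    simp_rw [← card_neighborSet_eq_degree, ← Nat.card_eq_fintype_card, Nat.card_coe_set_eq]
      at h1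
    omega
  rw [sum_tsub_distrib _ fun v _ => hT.one_le_ncard_neighborSet v, hsum, sum_const, smul_eq_mul,
    mul_one]
  omega

section BipartiteTrees

variable [Fintype V] [DecidableEq V] {A B : Finset V} {k : V → ℕ} {T T' : SimpleGraph V}

open Classical in
/-- The trees span `A ∪ B` and are isolated elsewhere in `V`, so that deleting a leaf keeps the
vertex type. -/
noncomputable def bipartiteTrees (A B : Finset V) (k : V → ℕ) : Finset (SimpleGraph V) :=
  {T | T.IsBipartiteWith A B ∧ T.IsAcyclic ∧
    (∀ u ∈ A ∪ B, ∀ v ∈ A ∪ B, T.Reachable u v) ∧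
    ∀ v ∈ A ∪ B, (T.neighborSet v).ncard = k v + 1}

theorem mem_bipartiteTrees :
    T ∈ bipartiteTrees A B k ↔ T.IsBipartiteWith A B ∧ T.IsAcyclic ∧
      (∀ u ∈ A ∪ B, ∀ v ∈ A ∪ B, T.Reachable u v) ∧
      ∀ v ∈ A ∪ B, (T.neighborSet v).ncard = k v + 1 := by
  simp [bipartiteTrees]

theorem bipartiteTrees_comm : bipartiteTrees A B k = bipartiteTrees B A k := by
  ext T
  simp only [mem_bipartiteTrees, isBipartiteWith_comm, union_comm]

theorem not_adj_of_mem_bipartiteTrees (hT : T ∈ bipartiteTrees A B k) (hv : v ∉ A ∪ B)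
    (w : V) : ¬T.Adj v w := fun h =>
  hv (by simpa using isBipartiteWith_support_subset (mem_bipartiteTrees.1 hT).1 ⟨w, h⟩)

theorem mem_bipartiteTrees_iff_isTree [Nonempty V] (hcover : ∀ v, v ∈ A ∪ B) :
    T ∈ bipartiteTrees A B k ↔
      T.IsBipartiteWith A B ∧ T.IsTree ∧ ∀ v, (T.neighborSet v).ncard = k v + 1 := by
  simp only [mem_bipartiteTrees, isTree_iff, connected_iff, Preconnected, hcover, forall_const]
  tauto

theorem bipartiteTrees_singleton_singleton (hxy : x ≠ y) (hkx : k x = 0) (hky : k y = 0) :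
    bipartiteTrees {x} {y} k = {edge x y} := by
  have hd : Disjoint ({x} : Set V) {y} := Set.disjoint_singleton.2 hxy
  ext T
  rw [mem_singleton, mem_bipartiteTrees]
  simp only [coe_singleton]
  constructor
  · rintro ⟨hbip, -, -, hdeg⟩
    obtain ⟨w, hw⟩ := (Set.ncard_pos (Set.toFinite _)).1
      (by rw [hdeg x (by simp)]; omega : 0 < (T.neighborSet x).ncard)
    obtain rfl : w = y := hbip.mem_of_mem_adj rfl hw
    ext a b
    rw [edge_adj]
    refine ⟨fun hab => ⟨by simpa using hbip.mem_of_adj hab, hab.ne⟩, ?_⟩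
    rintro ⟨⟨rfl, rfl⟩ | ⟨rfl, rfl⟩, -⟩
    · exact hw
    · exact hw.symm
  · rintro rfl
    have hbot : ⊥ ⊔ edge x y = edge x y := bot_sup_eq _
    have hreach : ∀ u ∈ ({x} ∪ {y} : Finset V), (edge x y).Reachable x u := by
      simp only [mem_union, mem_singleton]
      rintro u (rfl | rfl)
      · rfl
      · exact Adj.reachable ((edge_adj _ _ _ _).2 ⟨Or.inl ⟨rfl, rfl⟩, hxy⟩)
    refine ⟨isBipartiteWith_edge hd rfl rfl,
      hbot ▸ isAcyclic_bot.sup_edge_of_not_reachable (by simpa using hxy),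
      fun u hu v hv => (hreach u hu).symm.trans (hreach v hv), fun v hv => ?_⟩
    rw [← hbot, ncard_neighborSet_sup_edge hxy (by simp)]
    simp only [mem_union, mem_singleton] at hv
    rcases hv with rfl | rfl <;> simp [hkx, hky]

theorem sup_edge_mem_bipartiteTrees (hAB : Disjoint A B) (hx : x ∈ A) (hkx : k x = 0)
    (hy : y ∈ B) (hky : 1 ≤ k y)
    (hT' : T' ∈ bipartiteTrees (A.erase x) B (update k y (k y - 1))) :
    T' ⊔ edge x y ∈ bipartiteTrees A B k := by
  obtain ⟨hbip, hacyc, hreach, hdeg⟩ := mem_bipartiteTrees.1 hT'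
  have hxy : x ≠ y := fun h => Finset.disjoint_left.1 hAB hx (h ▸ hy)
  have hiso : ∀ w, ¬T'.Adj x w :=
    not_adj_of_mem_bipartiteTrees hT' (by simp [Finset.disjoint_left.1 hAB hx])
  have hx0 : T'.neighborSet x = ∅ := Set.eq_empty_of_forall_notMem hiso
  have hreach_y : ∀ u ∈ A ∪ B, (T' ⊔ edge x y).Reachable y u := by
    intro u hu
    rcases eq_or_ne u x with rfl | hux
    · exact (Adj.reachable (Or.inr ((edge_adj _ _ _ _).2 ⟨Or.inl ⟨rfl, rfl⟩, hxy⟩))).symm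
    · exact (hreach y (by simp [hy]) u (by simpa [hux] using hu)).mono le_sup_left
  refine mem_bipartiteTrees.2 ⟨?_, hacyc.sup_edge_of_not_reachable ?_,
    fun u hu v hv => (hreach_y u hu).symm.trans (hreach_y v hv), fun v hv => ?_⟩
  · exact (hbip.mono (coe_subset.2 (erase_subset x A)) subset_rfl (disjoint_coe.2 hAB)).sup
      (isBipartiteWith_edge (disjoint_coe.2 hAB) hx hy)
  · exact not_reachable_of_neighborSet_left_eq_empty hxy hx0
  · rw [ncard_neighborSet_sup_edge hxy (hiso y)]
    rcases eq_or_ne v x with rfl | hvx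
    · simp [hkx, hx0]
    · rw [hdeg v (by simpa [hvx] using hv)]
      rcases eq_or_ne v y with rfl | hvy
      · simp
        omega
      · simp [hvx, hvy]

theorem mem_bipartiteTrees_erase_of_sup_edge (hAB : Disjoint A B) (hx : x ∈ A) (hy : y ∈ B)
    (hA : (A.erase x).Nonempty) (hiso : ∀ w, ¬T'.Adj x w)
    (hT : T' ⊔ edge x y ∈ bipartiteTrees A B k) :
    1 ≤ k y ∧ T' ∈ bipartiteTrees (A.erase x) B (update k y (k y - 1)) := by
  obtain ⟨hbip, hacyc, hreach, hdeg⟩ := mem_bipartiteTrees.1 hT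
  have hxy : x ≠ y := fun h => Finset.disjoint_left.1 hAB hx (h ▸ hy)
  have hS : ∀ v ∈ A.erase x ∪ B, v ≠ x ∧ v ∈ A ∪ B := by
    intro v hv
    rcases mem_union.1 hv with hv | hv
    · exact ⟨ne_of_mem_erase hv, mem_union_left _ (mem_of_mem_erase hv)⟩
    · exact ⟨fun h => Finset.disjoint_left.1 hAB hx (h ▸ hv), mem_union_right _ hv⟩
  have hreach' : ∀ u ∈ A.erase x ∪ B, ∀ v ∈ A.erase x ∪ B, T'.Reachable u v :=
    fun u hu v hv => (hreach u (hS u hu).2 v (hS v hv).2).of_sup_edge hiso (hS u hu).1 (hS v hv).1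
  have hdeg' : ∀ v ∈ A.erase x ∪ B,
      (T'.neighborSet v).ncard + (if v = y then 1 else 0) = k v + 1 := by
    intro v hv
    rw [← hdeg v (hS v hv).2, ncard_neighborSet_sup_edge hxy (hiso y)]
    simp [(hS v hv).1]
  have hyS : y ∈ A.erase x ∪ B := mem_union_right _ hy
  -- `T'` still joins `y` to the vertices of `A \ {x}`, so `y` is not a leaf of `T' ⊔ edge x y`
  have hky : 1 ≤ k y := by
    obtain ⟨a, ha⟩ := hA
    have hya : y ≠ a := fun h => Finset.disjoint_left.1 hAB (mem_of_mem_erase ha) (h ▸ hy)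
    have h1 := (hreach' y hyS a (mem_union_left _ ha)).one_le_ncard_neighborSet hya
    have h2 := hdeg' y hyS
    rw [if_pos rfl] at h2
    omega
  refine ⟨hky, mem_bipartiteTrees.2 ⟨?_, hacyc.anti le_sup_left, hreach', fun v hv => ?_⟩⟩
  · rw [coe_erase]
    exact (hbip.anti le_sup_left).diff_singleton hiso
  · have h := hdeg' v hv
    rcases eq_or_ne v y with rfl | hvy
    · rw [if_pos rfl] at h
      rw [update_self]
      omega
    · simpa [hvy] using h

theorem card_bipartiteTrees_eq_sum (hAB : Disjoint A B) (hx : x ∈ A) (hkx : k x = 0)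
    (hA : (A.erase x).Nonempty) :
    #(bipartiteTrees A B k) =
      ∑ y ∈ B with 1 ≤ k y, #(bipartiteTrees (A.erase x) B (update k y (k y - 1))) := by
  classical
  have hxB : x ∉ B := Finset.disjoint_left.1 hAB hx
  have hne : ∀ {y}, y ∈ B → x ≠ y := fun hy h => hxB (h ▸ hy)
  have hiso : ∀ {k' T'}, T' ∈ bipartiteTrees (A.erase x) B k' → ∀ w, ¬T'.Adj x w :=
    fun hT' => not_adj_of_mem_bipartiteTrees hT' (by simp [hxB])
  have hunion : bipartiteTrees A B k = {y ∈ B | 1 ≤ k y}.biUnion fun y =>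
      (bipartiteTrees (A.erase x) B (update k y (k y - 1))).image (· ⊔ edge x y) := by
    ext T
    simp only [mem_biUnion, mem_image, mem_filter]
    constructor
    · intro hT
      have hdeg := (mem_bipartiteTrees.1 hT).2.2.2 x (mem_union_left _ hx)
      obtain ⟨y, hxy, T', hT'x, rfl⟩ :=
        exists_sup_edge_eq_of_ncard_neighborSet_eq_one (by rw [hdeg, hkx])
      have hy : y ∈ B := (mem_bipartiteTrees.1 hT).1.mem_of_mem_adj hx hxy
      obtain ⟨hky, hT'⟩ := mem_bipartiteTrees_erase_of_sup_edge hAB hx hy hA hT'x hT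
      exact ⟨y, ⟨hy, hky⟩, T', hT', rfl⟩
    · rintro ⟨y, ⟨hy, hky⟩, T', hT', rfl⟩
      exact sup_edge_mem_bipartiteTrees hAB hx hkx hy hky hT'
  rw [hunion, card_biUnion]
  · refine sum_congr rfl fun y hy => card_image_of_injOn fun T₁ h₁ T₂ h₂ h => ?_
    exact ((sup_edge_eq_sup_edge_iff (hiso h₁) (hiso h₂) (hne (mem_filter.1 hy).1)).1 h).2
  · intro y₁ hy₁ y₂ _ hy
    refine Finset.disjoint_left.2 fun T h₁ h₂ => ?_
    obtain ⟨T₁, hT₁, rfl⟩ := mem_image.1 h₁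
    obtain ⟨T₂, hT₂, h⟩ := mem_image.1 h₂
    exact hy ((sup_edge_eq_sup_edge_iff (hiso hT₁) (hiso hT₂) (hne (mem_filter.1 hy₁).1)).1
      h.symm).1

omit [Fintype V] in
theorem mul_prod_factorial_update_sub_one {s : Finset V} (hy : y ∈ s) (hky : 1 ≤ k y) :
    k y * ∏ v ∈ s, (update k y (k y - 1) v)! = ∏ v ∈ s, (k v)! := by
  rw [← mul_prod_erase s _ hy, ← mul_prod_erase s (fun v => (k v)!) hy, update_self,
    ← mul_assoc, Nat.mul_factorial_pred (by omega)]
  congr 1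
  exact prod_congr rfl fun v hv => by rw [update_of_ne (ne_of_mem_erase hv)]

theorem card_bipartiteTrees_mul_prod_factorial (hA : A.Nonempty) (hB : B.Nonempty)
    (hAB : Disjoint A B) (hkA : ∑ v ∈ A, k v = #B - 1) (hkB : ∑ v ∈ B, k v = #A - 1) :
    #(bipartiteTrees A B k) * ((∏ v ∈ A, (k v)!) * ∏ v ∈ B, (k v)!) =
      (#A - 1)! * (#B - 1)! := by
  induction hN : #A + #B using Nat.strong_induction_on generalizing A B k with
  | _ N ih =>
  wlog hBA : #B ≤ #A generalizing A B
  · rw [bipartiteTrees_comm, mul_comm (∏ v ∈ A, _), mul_comm (#A - 1)!]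
    exact this hB hA hAB.symm hkB hkA (by omega) (by omega)
  obtain hA1 | hA2 : #A = 1 ∨ 2 ≤ #A := by have := hA.card_pos; omega
  · obtain ⟨x, rfl⟩ := card_eq_one.1 hA1
    obtain ⟨y, rfl⟩ := card_eq_one.1 (by have := hB.card_pos; omega : #B = 1)
    have hxy : x ≠ y := fun h => Finset.disjoint_left.1 hAB (mem_singleton_self x) (by simp [h])
    simp only [sum_singleton, card_singleton] at hkA hkB
    rw [bipartiteTrees_singleton_singleton hxy hkA hkB]
    simp [hkA, hkB]
  obtain ⟨x, hx, hkx⟩ : ∃ x ∈ A, k x = 0 := by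
    obtain ⟨x, hx, h⟩ :=
      exists_lt_of_sum_lt (s := A) (f := k) (g := fun _ => 1) (by simp; omega)
    exact ⟨x, hx, by omega⟩
  have hAx : #(A.erase x) = #A - 1 := card_erase_of_mem hx
  have hA' : (A.erase x).Nonempty := card_pos.1 (by omega)
  have hterm : ∀ y ∈ B, 1 ≤ k y →
      #(bipartiteTrees (A.erase x) B (update k y (k y - 1))) *
        ((∏ v ∈ A, (k v)!) * ∏ v ∈ B, (k v)!) = k y * ((#A - 1 - 1)! * (#B - 1)!) := by
    intro y hy hky
    have hyA : y ∉ A := Finset.disjoint_right.1 hAB hy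
    have hupd : ∀ v ∈ A.erase x, update k y (k y - 1) v = k v := fun v hv =>
      update_of_ne (ne_of_mem_of_not_mem (mem_of_mem_erase hv) hyA) _ _
    have hsumA : ∑ v ∈ A.erase x, update k y (k y - 1) v = #B - 1 := by
      rw [sum_congr rfl hupd, sum_erase A hkx, hkA]
    have hsumB : ∑ v ∈ B, update k y (k y - 1) v = #(A.erase x) - 1 := by
      have := add_sum_erase B k hy
      rw [sum_update_of_mem hy, sdiff_singleton_eq_erase, hAx]
      omega
    have hprodA : ∏ v ∈ A.erase x, (update k y (k y - 1) v)! = ∏ v ∈ A, (k v)! := by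
      rw [prod_congr rfl fun v hv => congrArg Nat.factorial (hupd v hv),
        prod_erase A (by simp [hkx])]
    have IH := ih _ (by omega) hA' hB (disjoint_of_subset_left (erase_subset x A) hAB) hsumA
      hsumB rfl
    rw [hAx] at IH
    rw [← hprodA, ← mul_prod_factorial_update_sub_one hy hky, ← IH]
    ring
  rw [card_bipartiteTrees_eq_sum hAB hx hkx hA', sum_mul,
    sum_congr rfl fun y hy => hterm y (mem_filter.1 hy).1 (mem_filter.1 hy).2,
    sum_filter_of_ne fun y _ h => Nat.one_le_iff_ne_zero.2 (left_ne_zero_of_mul h), ← sum_mul,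
    hkB, ← mul_assoc, Nat.mul_factorial_pred (by omega)]

end BipartiteTrees

section CompleteBipartite

variable {α β : Type*}

noncomputable def degreesPred (T : SimpleGraph (α ⊕ β)) : (α → ℕ) × (β → ℕ) :=
  (fun a => (T.neighborSet (.inl a)).ncard - 1, fun b => (T.neighborSet (.inr b)).ncard - 1)

variable [Fintype α] [Fintype β] {T : SimpleGraph (α ⊕ β)}

theorem le_completeBipartiteGraph_iff :
    T ≤ completeBipartiteGraph α β ↔
      T.IsBipartiteWith (univ.map .inl : Finset (α ⊕ β)) (univ.map .inr : Finset (α ⊕ β)) := by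
  simp only [coe_map, Embedding.inl_apply, Embedding.inr_apply, coe_univ, Set.image_univ]
  constructor
  · refine fun h => ⟨Set.isCompl_range_inl_range_inr.disjoint, fun v w hvw => ?_⟩
    have := h hvw
    rcases v with a | b <;> rcases w with a' | b' <;> simp_all
  · intro h v w hvw
    obtain ⟨⟨a, rfl⟩, ⟨b, rfl⟩⟩ | ⟨⟨b, rfl⟩, ⟨a, rfl⟩⟩ := h.mem_of_adj hvw <;> simp

variable [DecidableEq α] [DecidableEq β]

theorem mem_univ_map_inl_union_univ_map_inr (v : α ⊕ β) :
    v ∈ (univ.map .inl ∪ univ.map .inr : Finset (α ⊕ β)) := by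
  rcases v with a | b <;> simp

variable [Nonempty α] [Nonempty β]

theorem isOddTree_and_degreesPred_eq_iff {k : α → ℕ} {l : β → ℕ}
    (hk : ∀ a, Even (k a)) (hl : ∀ b, Even (l b)) :
    ((T ≤ completeBipartiteGraph α β ∧ T.IsTree ∧ ∀ v, Odd (T.neighborSet v).ncard) ∧
        degreesPred T = (k, l)) ↔
      T ∈ bipartiteTrees (univ.map .inl) (univ.map .inr) (Sum.elim k l) := by
  rw [mem_bipartiteTrees_iff_isTree mem_univ_map_inl_union_univ_map_inr,
    ← le_completeBipartiteGraph_iff]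
  have hdeg : degreesPred T = (k, l) ↔ ∀ v, (T.neighborSet v).ncard - 1 = Sum.elim k l v := by
    simp [degreesPred, Prod.ext_iff, funext_iff, Sum.forall]
  rw [hdeg]
  constructor
  · rintro ⟨⟨hle, hT, -⟩, h⟩
    exact ⟨hle, hT, fun v => by have := hT.one_le_ncard_neighborSet v; have := h v; omega⟩
  · rintro ⟨hle, hT, h⟩
    refine ⟨⟨hle, hT, fun v => ?_⟩, fun v => by simp [h v]⟩
    rw [h v]
    rcases v with a | b
    · exact (hk a).add_one
    · exact (hl b).add_one

theorem degreesPred_of_isOddTree (hle : T ≤ completeBipartiteGraph α β) (hT : T.IsTree)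
    (hodd : ∀ v, Odd (T.neighborSet v).ncard) :
    (∑ a, (degreesPred T).1 a = Fintype.card β - 1 ∧ ∀ a, Even ((degreesPred T).1 a)) ∧
      (∑ b, (degreesPred T).2 b = Fintype.card α - 1 ∧ ∀ b, Even ((degreesPred T).2 b)) := by
  have hbip := le_completeBipartiteGraph_iff.1 hle
  have hcover := mem_univ_map_inl_union_univ_map_inr (α := α) (β := β)
  refine ⟨⟨?_, fun a => Nat.Odd.sub_odd (hodd _) odd_one⟩,
    ⟨?_, fun b => Nat.Odd.sub_odd (hodd _) odd_one⟩⟩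
  · simpa [degreesPred] using hT.sum_ncard_neighborSet_sub_one hbip hcover
  · simpa [degreesPred] using
      hT.sum_ncard_neighborSet_sub_one hbip.symm fun v => by
        rw [union_comm]; exact hcover v

theorem card_bipartiteTrees_sum_elim {k : α → ℕ} {l : β → ℕ}
    (hk : ∑ a, k a = Fintype.card β - 1) (hl : ∑ b, l b = Fintype.card α - 1) :
    #(bipartiteTrees (univ.map .inl) (univ.map .inr) (Sum.elim k l)) =
      (Fintype.card α - 1)! * (Fintype.card β - 1)! / ((∏ a, (k a)!) * ∏ b, (l b)!) := by
  have h := card_bipartiteTrees_mul_prod_factorial (A := (univ : Finset α).map .inl)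
    (B := (univ : Finset β).map .inr) (k := Sum.elim k l) (by simp) (by simp)
    (disjoint_map_inl_map_inr _ _) (by simpa using hk) (by simpa using hl)
  simp only [prod_map, card_map, card_univ, Embedding.inl_apply, Embedding.inr_apply,
    Sum.elim_inl, Sum.elim_inr] at h
  rw [← h, Nat.mul_div_cancel _ (by positivity)]

end CompleteBipartite

end SimpleGraph

open SimpleGraph

theorem stmt_11 (m n : ℕ) (hm : 0 < m) (hn : 0 < n) :
    Nat.card {T : SimpleGraph (Fin m ⊕ Fin n) //
        T ≤ completeBipartiteGraph (Fin m) (Fin n) ∧ T.IsTree ∧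
        ∀ v, Odd (Nat.card {w // T.Adj v w})} =
      ∑ k ∈ (Finset.Nat.antidiagonalTuple m (n - 1)).filter (fun k => ∀ i, Even (k i)),
        ∑ l ∈ (Finset.Nat.antidiagonalTuple n (m - 1)).filter (fun l => ∀ j, Even (l j)),
          ((m - 1).factorial * (n - 1).factorial) /
            ((∏ i, (k i).factorial) * ∏ j, (l j).factorial) := by
  classical
  have : Nonempty (Fin m) := Fin.pos_iff_nonempty.1 hm
  have : Nonempty (Fin n) := Fin.pos_iff_nonempty.1 hn
  simp_rw [natCard_adj_eq_ncard_neighborSet]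
  rw [Nat.card_eq_fintype_card, Fintype.card_subtype,
    card_eq_sum_card_fiberwise (f := degreesPred) (t := _ ×ˢ _) fun T hT => ?_, sum_product]
  · refine sum_congr rfl fun k hk => sum_congr rfl fun l hl => ?_
    simp only [mem_filter, Nat.mem_antidiagonalTuple] at hk hl
    have hcount := card_bipartiteTrees_sum_elim (k := k) (l := l) (by simpa using hk.1)
      (by simpa using hl.1)
    simp only [Fintype.card_fin] at hcount
    rw [← hcount]
    congr 1
    ext T
    simpa using isOddTree_and_degreesPred_eq_iff hk.2 hl.2
  · obtain ⟨hle, hT, hodd⟩ := (mem_filter.1 (mem_coe.1 hT)).2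
    simpa [Nat.mem_antidiagonalTuple] using degreesPred_of_isOddTree hle hT hodd
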